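/- arXiv:2108.05194 — 2 statements merged into one kernel-verified Lean document; each statement's English description precedes it below -/
import Mathlib

section
/- Let (X,Gₙ) be a complete generalized n-metric space and T : X → X satisfy Gₙ(Tx₁,...,Txₙ) ≤ k·Gₙ(x₁,...,xₙ) for all x₁,...,xₙ with some k ∈ [0,1). Then for any y₀ ∈ X, the iterate sequence y_m = T^m y₀ is Gₙ-Cauchy, and in fact Gₙ(y_m, y_p, ..., y_p) ≤ (kᵐ/(1−k))·Gₙ(y₀, y₁, ..., y₁) for all p > m. -/
open Filter Topology

/-- The tuple `(x, y, y, ..., y)` of length `n`. -/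
def tailRep {X : Type*} (n : ℕ) (x y : X) : Fin n → X := fun i => if (i : ℕ) = 0 then x else y

/-- The tuple `(x, x, ..., x, y)` of length `n`. -/
def headRep {X : Type*} (n : ℕ) (x y : X) : Fin n → X := fun i => if (i : ℕ) + 1 = n then y else x

/-- `G` is a generalized `n`-metric on `X`. -/
structure IsGenNMetric {X : Type*} (n : ℕ) (hn : 3 ≤ n) (G : (Fin n → X) → ℝ) : Prop where
  nonneg : ∀ f, 0 ≤ G f
  g1 : ∀ x : X, G (fun _ => x) = 0
  g2 : ∀ x y : X, x ≠ y → 0 < G (headRep n x y)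
  g3 : ∀ f : Fin n → X, (∃ i j : Fin n, (i : ℕ) ≠ 0 ∧ (j : ℕ) ≠ 0 ∧ f i ≠ f j) →
      G (headRep n (f ⟨0, by omega⟩) (f ⟨1, by omega⟩)) ≤ G f
  g4 : ∀ (f : Fin n → X) (π : Equiv.Perm (Fin n)), G (f ∘ π) = G f
  g5 : ∀ (f : Fin n → X) (w : X),
      G f ≤ G (tailRep n (f ⟨0, by omega⟩) w) + G (Function.update f ⟨0, by omega⟩ w)

/-- The metric associated to a generalized `n`-metric. -/
def dG {X : Type*} (n : ℕ) (G : (Fin n → X) → ℝ) (x y : X) : ℝ :=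
  G (tailRep n x y) + G (headRep n x y)

/-- A sequence is `Gₙ`-Cauchy. -/
def IsGCauchy {X : Type*} (n : ℕ) (G : (Fin n → X) → ℝ) (x : ℕ → X) : Prop :=
  ∀ ε > (0 : ℝ), ∃ N : ℕ, ∀ k : Fin n → ℕ, (∀ i, N ≤ k i) → G (fun i => x (k i)) < ε

/-- A sequence `Gₙ`-converges to `l`. -/
def GTendsto {X : Type*} (n : ℕ) (G : (Fin n → X) → ℝ) (x : ℕ → X) (l : X) : Prop :=
  Tendsto (fun m => G (tailRep n (x m) l)) atTop (nhds 0)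

/-- `(X, Gₙ)` is complete. -/
def GComplete {X : Type*} (n : ℕ) (G : (Fin n → X) → ℝ) : Prop :=
  ∀ x : ℕ → X, IsGCauchy n G x → ∃ l, GTendsto n G x l

/-! Replacing one entry at a time by a common point `w`, the rectangle inequality bounds
`Gₙ(x₁, …, xₙ)` by `∑ᵢ Gₙ(xᵢ, w, …, w)`; so it suffices to control `Gₙ(y_m, y_p, …, y_p)`.
The contraction gives `Gₙ(y_j, y_{j+1}, …, y_{j+1}) ≤ kʲ Gₙ(y₀, y₁, …, y₁)`, and the rectangle
inequality in the form `Gₙ(x, z, …, z) ≤ Gₙ(x, w, …, w) + Gₙ(w, z, …, z)` sums these along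
`y_m, …, y_p` to a geometric series. -/

section tailRep

variable {X : Type*} {n : ℕ}

theorem tailRep_self (x : X) : tailRep n x x = fun _ => x := by
  funext i; unfold tailRep; split <;> rfl

theorem comp_tailRep {Y : Type*} (g : X → Y) (x z : X) :
    g ∘ tailRep n x z = tailRep n (g x) (g z) := by
  funext i
  by_cases h : (i : ℕ) = 0 <;> simp [tailRep, h]

theorem update_tailRep_zero (hn : 0 < n) (x z w : X) :
    Function.update (tailRep n x z) ⟨0, hn⟩ w = tailRep n w z := by
  funext i
  by_cases h : (i : ℕ) = 0 <;> simp [Function.update_apply, tailRep, Fin.ext_iff, h]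

end tailRep

theorem iterate_apply_le_pow_mul {X ι : Type*} {G : (ι → X) → ℝ} {T : X → X} {k : ℝ}
    (hk0 : 0 ≤ k) (hT : ∀ f : ι → X, G (fun i => T (f i)) ≤ k * G f) (f : ι → X) (m : ℕ) :
    G (fun i => T^[m] (f i)) ≤ k ^ m * G f := by
  induction m generalizing f with
  | zero => simp
  | succ m ih =>
    calc G (fun i => T^[m] (T (f i))) ≤ k ^ m * G (fun i => T (f i)) := ih _
      _ ≤ k ^ m * (k * G f) := by gcongr; exact hT f
      _ = k ^ (m + 1) * G f := by ring

namespace IsGenNMetric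

variable {X : Type*} {n : ℕ} {hn : 3 ≤ n} {G : (Fin n → X) → ℝ}

theorem tailRep_self_eq_zero (hG : IsGenNMetric n hn G) (x : X) : G (tailRep n x x) = 0 := by
  rw [tailRep_self, hG.g1]

theorem tailRep_le_add (hG : IsGenNMetric n hn G) (x z w : X) :
    G (tailRep n x z) ≤ G (tailRep n x w) + G (tailRep n w z) := by
  simpa [update_tailRep_zero, tailRep] using hG.g5 (tailRep n x z) w

/-- The rectangle inequality `g5`, moved by a transposition from the entry `0` to the entry `a`. -/
theorem le_tailRep_add_update (hG : IsGenNMetric n hn G) (f : Fin n → X) (a : Fin n) (w : X) :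
    G f ≤ G (tailRep n (f a) w) + G (Function.update f a w) := by
  let π : Equiv.Perm (Fin n) := Equiv.swap ⟨0, by omega⟩ a
  have hupdate : Function.update (f ∘ π) ⟨0, by omega⟩ w = Function.update f a w ∘ π := by
    rw [Function.update_comp_equiv, Equiv.symm_swap, Equiv.swap_apply_right]
  calc G f = G (f ∘ π) := (hG.g4 f π).symm
    _ ≤ G (tailRep n (f a) w) + G (Function.update (f ∘ π) ⟨0, by omega⟩ w) := by
        simpa [π] using hG.g5 (f ∘ π) w
    _ = G (tailRep n (f a) w) + G (Function.update f a w) := by rw [hupdate, hG.g4]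

theorem le_sum_tailRep_of_eq_of_notMem (hG : IsGenNMetric n hn G) (w : X) (s : Finset (Fin n))
    (f : Fin n → X) (hf : ∀ i ∉ s, f i = w) : G f ≤ ∑ i ∈ s, G (tailRep n (f i) w) := by
  induction s using Finset.induction_on generalizing f with
  | empty =>
    rw [show f = fun _ => w from funext fun i => hf i (Finset.notMem_empty i), hG.g1]
    simp
  | insert a s ha ih =>
    have hupdate : ∀ i ∉ s, Function.update f a w i = w := by
      intro i hi
      by_cases h : i = a
      · simp [h]
      · simpa [h] using hf i (by simp [h, hi])
    have hsum : ∑ i ∈ s, G (tailRep n (Function.update f a w i) w) =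
        ∑ i ∈ s, G (tailRep n (f i) w) :=
      Finset.sum_congr rfl fun i hi => by rw [Function.update_of_ne (ne_of_mem_of_not_mem hi ha)]
    calc G f ≤ G (tailRep n (f a) w) + G (Function.update f a w) := hG.le_tailRep_add_update f a w
      _ ≤ G (tailRep n (f a) w) + ∑ i ∈ s, G (tailRep n (f i) w) := by
          rw [← hsum]; gcongr; exact ih _ hupdate
      _ = ∑ i ∈ insert a s, G (tailRep n (f i) w) := by rw [Finset.sum_insert ha]

theorem le_sum_tailRep (hG : IsGenNMetric n hn G) (f : Fin n → X) (w : X) :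
    G f ≤ ∑ i, G (tailRep n (f i) w) :=
  hG.le_sum_tailRep_of_eq_of_notMem w Finset.univ f fun i hi => absurd (Finset.mem_univ i) hi

theorem tailRep_le_sum_Ico (hG : IsGenNMetric n hn G) (u : ℕ → X) {m p : ℕ} (hmp : m ≤ p) :
    G (tailRep n (u m) (u p)) ≤ ∑ j ∈ Finset.Ico m p, G (tailRep n (u j) (u (j + 1))) := by
  induction p, hmp using Nat.le_induction with
  | base => simp [hG.tailRep_self_eq_zero]
  | succ p hmp ih =>
    rw [Finset.sum_Ico_succ_top hmp]
    exact (hG.tailRep_le_add _ _ (u p)).trans (by gcongr)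

theorem tailRep_le_geometric (hG : IsGenNMetric n hn G) {u : ℕ → X} {k d : ℝ}
    (hk0 : 0 ≤ k) (hk1 : k < 1) (hstep : ∀ j, G (tailRep n (u j) (u (j + 1))) ≤ k ^ j * d)
    {m p : ℕ} (hmp : m ≤ p) : G (tailRep n (u m) (u p)) ≤ k ^ m / (1 - k) * d := by
  have hd : 0 ≤ d := (hG.nonneg _).trans (by simpa using hstep 0)
  calc G (tailRep n (u m) (u p)) ≤ ∑ j ∈ Finset.Ico m p, k ^ j * d :=
        (hG.tailRep_le_sum_Ico u hmp).trans (Finset.sum_le_sum fun j _ => hstep j)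
    _ = (∑ j ∈ Finset.Ico m p, k ^ j) * d := (Finset.sum_mul _ _ _).symm
    _ ≤ k ^ m / (1 - k) * d := by gcongr; exact geom_sum_Ico_le_of_lt_one hk0 hk1

theorem isGCauchy_of_tailRep_le (hG : IsGenNMetric n hn G) {u : ℕ → X} {b : ℕ → ℝ}
    (hb : Antitone b) (hb0 : Tendsto b atTop (𝓝 0))
    (hu : ∀ m p, m ≤ p → G (tailRep n (u m) (u p)) ≤ b m) : IsGCauchy n G u := by
  intro ε hε
  have hnb : Tendsto (fun N => (n : ℝ) * b N) atTop (𝓝 0) := by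
    simpa using hb0.const_mul (n : ℝ)
  obtain ⟨N, hN⟩ := (hnb.eventually_lt_const hε).exists
  refine ⟨N, fun idx hidx => ?_⟩
  let M := Finset.univ.sup idx
  have hle : ∀ i, idx i ≤ M := fun i => Finset.le_sup (Finset.mem_univ i)
  calc G (fun i => u (idx i)) ≤ ∑ i, G (tailRep n (u (idx i)) (u M)) := hG.le_sum_tailRep _ _
    _ ≤ ∑ _i : Fin n, b N :=
        Finset.sum_le_sum fun i _ => (hu _ _ (hle i)).trans (hb (hidx i))
    _ = n * b N := by simp
    _ < ε := hN

end IsGenNMetric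

theorem genNMetric_iterate_cauchy_general {X : Type*} {n : ℕ} {hn : 3 ≤ n} {G : (Fin n → X) → ℝ}
    (hG : IsGenNMetric n hn G) (T : X → X)
    (k : ℝ) (hk0 : 0 ≤ k) (hk1 : k < 1)
    (hT : ∀ f : Fin n → X, G (fun i => T (f i)) ≤ k * G f) (y₀ : X) :
    IsGCauchy n G (fun m => T^[m] y₀) ∧
    ∀ m p : ℕ, m < p →
      G (tailRep n (T^[m] y₀) (T^[p] y₀)) ≤ (k ^ m / (1 - k)) * G (tailRep n y₀ (T y₀)) := by
  set d := G (tailRep n y₀ (T y₀))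
  have hstep : ∀ j, G (tailRep n (T^[j] y₀) (T^[j + 1] y₀)) ≤ k ^ j * d := fun j => by
    rw [Function.iterate_succ_apply, ← comp_tailRep]
    exact iterate_apply_le_pow_mul hk0 hT _ j
  have hgeom : ∀ m p, m ≤ p → G (tailRep n (T^[m] y₀) (T^[p] y₀)) ≤ k ^ m / (1 - k) * d :=
    fun m p hmp => hG.tailRep_le_geometric hk0 hk1 hstep hmp
  have hd : 0 ≤ d := hG.nonneg _
  have hanti : Antitone fun m => k ^ m / (1 - k) * d := fun a b hab => by
    have : 0 < 1 - k := by linarith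
    dsimp only
    gcongr ?_ / _ * _
    exact pow_le_pow_of_le_one hk0 hk1.le hab
  have hlim : Tendsto (fun m => k ^ m / (1 - k) * d) atTop (𝓝 0) := by
    simpa using ((tendsto_pow_atTop_nhds_zero_of_lt_one hk0 hk1).div_const (1 - k)).mul_const d
  exact ⟨hG.isGCauchy_of_tailRep_le hanti hlim hgeom, fun m p hmp => hgeom m p hmp.le⟩

/-- iterate sequence of a contraction is `Gₙ`-Cauchy with geometric bound. -/
theorem genNMetric_iterate_cauchy {X : Type*} {n : ℕ} {hn : 3 ≤ n} {G : (Fin n → X) → ℝ}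
    (hG : IsGenNMetric n hn G) (hcomp : GComplete n G) (T : X → X)
    (k : ℝ) (hk0 : 0 ≤ k) (hk1 : k < 1)
    (hT : ∀ f : Fin n → X, G (fun i => T (f i)) ≤ k * G f) (y₀ : X) :
    IsGCauchy n G (fun m => T^[m] y₀) ∧
    ∀ m p : ℕ, m < p →
      G (tailRep n (T^[m] y₀) (T^[p] y₀)) ≤ (k ^ m / (1 - k)) * G (tailRep n y₀ (T y₀)) :=
  genNMetric_iterate_cauchy_general hG T k hk0 hk1 hT y₀
end

section
/- Let S ⊂ U and D ⊂ V (U, V Banach spaces), g : S × D → ℝ and M : S × D × ℝ → ℝ bounded, τ : S × D → S, and let X = B(S) with Gₙ(ψ₁,...,ψₙ) = max_{p<q} sup_x |ψ_p(x) − ψ_q(x)| (n ≥ 3). Define T : X → X by T(ψ)(x) = sup_{y ∈ D} [g(x,y) + M(x,y,ψ(τ(x,y)))]. Suppose there exists r ∈ [0,1) such that whenever (1/(1+r))·Gₙ(ψ, Tψ, ..., Tψ) ≤ Gₙ(ψ, φ, ..., φ), one has |M(x,y,ψ(t)) − M(x,y,φ(t))| ≤ r|ψ(t) − φ(t)| for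 all (x,y) ∈ S × D and t ∈ S. Then the functional equation f(x) = sup_{y ∈ D}[g(x,y) + M(x,y,f(τ(x,y)))] has a unique bounded solution f ∈ X. -/
/-! Since `Gₙ(ψ, φ, …, φ) = sup_x |ψ x - φ x|`, the hypothesis says that whenever Suzuki's premise
`θ(r) d(ψ, Tψ) ≤ d(ψ, φ)` holds, `M` is `r`-Lipschitz in its last argument, hence
`d(Tψ, Tφ) ≤ r d(ψ, φ)`. As `T` maps every function to a bounded one, it is thus a Suzuki
contraction of the Banach space `ℓ^∞(S)`.

Suzuki's theorem: taking `y = Tx` in the premise gives `d(Tx, T²x) ≤ r d(x, Tx)`, so orbits are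
Cauchy. For the limit `z`, the triangle inequality `d(x, Tx) ≤ d(x, z) + d(Tx, z)` forces the
premise for `(x, z)` or for `(Tx, z)`, so `d(Tz, z) ≤ d(T^{k+1}x, z) + r d(T^k x, z)` for
infinitely many `k`, whence `Tz = z`. -/

open Filter Topology

/-- Boundedness of a real-valued function. -/
def Bdd {S : Type*} (ψ : S → ℝ) : Prop := ∃ C, ∀ x, |ψ x| ≤ C

/-- `Gₙ(ψ₁,...,ψₙ) = max_{p<q} sup_x |ψ_p x − ψ_q x|`. -/
noncomputable def GFun {S : Type*} (n : ℕ) (hn : 3 ≤ n) (f : Fin n → (S → ℝ)) : ℝ :=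
  (Finset.univ.filter (fun p : Fin n × Fin n => p.1 < p.2)).sup'
    ⟨((⟨0, by omega⟩ : Fin n), (⟨1, by omega⟩ : Fin n)),
      Finset.mem_filter.mpr ⟨Finset.mem_univ _, Fin.mk_lt_mk.mpr one_pos⟩⟩
    (fun p => ⨆ x, |f p.1 x - f p.2 x|)

open Function
open scoped ENNReal

def SuzukiContraction {X : Type*} [PseudoMetricSpace X] (r : ℝ) (T : X → X) : Prop :=
  ∀ x y, 1 / (1 + r) * dist x (T x) ≤ dist x y → dist (T x) (T y) ≤ r * dist x y

namespace SuzukiContraction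

variable {X : Type*} [MetricSpace X] {r : ℝ} {T : X → X}

theorem dist_map_map_le (hT : SuzukiContraction r T) (hr : 0 ≤ r) (x : X) :
    dist (T x) (T (T x)) ≤ r * dist x (T x) :=
  hT x (T x) <| mul_le_of_le_one_left dist_nonneg <| (div_le_one (by linarith)).2 (by linarith)

theorem dist_iterate_succ_le (hT : SuzukiContraction r T) (hr : 0 ≤ r) (x : X) (k : ℕ) :
    dist (T^[k] x) (T^[k + 1] x) ≤ dist x (T x) * r ^ k := by
  induction k with
  | zero => simp
  | succ k ih =>
    simp only [iterate_succ_apply'] at ih ⊢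
    calc _ ≤ r * dist (T^[k] x) (T (T^[k] x)) := hT.dist_map_map_le hr _
      _ ≤ r * (dist x (T x) * r ^ k) := by gcongr
      _ = dist x (T x) * r ^ (k + 1) := by ring

theorem cauchySeq_iterate (hT : SuzukiContraction r T) (hr0 : 0 ≤ r) (hr1 : r < 1) (x : X) :
    CauchySeq fun k => T^[k] x :=
  cauchySeq_of_le_geometric r _ hr1 (hT.dist_iterate_succ_le hr0 x)

theorem premise_or_premise_map (hT : SuzukiContraction r T) (hr : 0 ≤ r) (x z : X) :
    1 / (1 + r) * dist x (T x) ≤ dist x z ∨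
      1 / (1 + r) * dist (T x) (T (T x)) ≤ dist (T x) z := by
  by_contra! h
  have htri : dist x (T x) ≤ dist x z + dist (T x) z := dist_triangle_right _ _ _
  have hstep := hT.dist_map_map_le hr x
  have hθ : 1 / (1 + r) * (1 + r) * dist x (T x) = dist x (T x) := by
    rw [one_div_mul_cancel (by linarith), one_mul]
  nlinarith [mul_le_mul_of_nonneg_left hstep (by positivity : (0 : ℝ) ≤ 1 / (1 + r))]

theorem isFixedPt_of_tendsto_iterate (hT : SuzukiContraction r T) (hr : 0 ≤ r) {x z : X}
    (hz : Tendsto (fun k => T^[k] x) atTop (𝓝 z)) : IsFixedPt T z := by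
  set a : ℕ → ℝ := fun k => dist (T^[k + 1] x) z + r * dist (T^[k] x) z
  have hd := tendsto_iff_dist_tendsto_zero.1 hz
  have ha : Tendsto a atTop (𝓝 0) := by
    have h := (hd.comp (tendsto_add_atTop_nat 1)).add (hd.const_mul r)
    rwa [mul_zero, add_zero] at h
  have hle : ∀ j, 1 / (1 + r) * dist (T^[j] x) (T (T^[j] x)) ≤ dist (T^[j] x) z →
      dist (T z) z ≤ a j := fun j hj =>
    calc dist (T z) z ≤ dist (T z) (T^[j + 1] x) + dist (T^[j + 1] x) z := dist_triangle _ _ _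
      _ ≤ r * dist (T^[j] x) z + dist (T^[j + 1] x) z := by
          rw [iterate_succ_apply', dist_comm]; gcongr; exact hT _ _ hj
      _ = a j := add_comm _ _
  have hmax : ∀ k, dist (T z) z ≤ max (a k) (a (k + 1)) := fun k => by
    rcases hT.premise_or_premise_map hr (T^[k] x) z with h | h
    · exact (hle k h).trans (le_max_left _ _)
    · rw [← iterate_succ_apply' T k] at h
      exact (hle (k + 1) h).trans (le_max_right _ _)
  have h0 := ge_of_tendsto' (by simpa using ha.max (ha.comp (tendsto_add_atTop_nat 1))) hmax
  exact dist_le_zero.1 h0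

theorem eq_of_isFixedPt (hT : SuzukiContraction r T) (hr : r < 1) {z w : X}
    (hz : IsFixedPt T z) (hw : IsFixedPt T w) : z = w := by
  have h := hT z w (by rw [hz.eq, dist_self, mul_zero]; exact dist_nonneg)
  rw [hz.eq, hw.eq] at h
  exact dist_le_zero.1 (by nlinarith [dist_nonneg (x := z) (y := w)])

theorem existsUnique_isFixedPt [CompleteSpace X] [Nonempty X] (hT : SuzukiContraction r T)
    (hr0 : 0 ≤ r) (hr1 : r < 1) : ∃! z, IsFixedPt T z := by
  obtain ⟨x⟩ := ‹Nonempty X›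
  obtain ⟨z, hz⟩ := cauchySeq_tendsto_of_complete (hT.cauchySeq_iterate hr0 hr1 x)
  exact ⟨z, hT.isFixedPt_of_tendsto_iterate hr0 hz, fun w hw =>
    hT.eq_of_isFixedPt hr1 hw (hT.isFixedPt_of_tendsto_iterate hr0 hz)⟩

end SuzukiContraction

section Supremum

variable {ι : Type*}

theorem abs_iSup_sub_iSup_le {F G : ι → ℝ} {C : ℝ} (hF : BddAbove (Set.range F))
    (hG : BddAbove (Set.range G)) (hC : 0 ≤ C) (h : ∀ i, |F i - G i| ≤ C) :
    |(⨆ i, F i) - ⨆ i, G i| ≤ C := by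
  rcases isEmpty_or_nonempty ι with hι | hι
  · simpa using hC
  refine abs_sub_le_iff.2 ⟨sub_le_iff_le_add.2 (ciSup_le fun i => ?_),
    sub_le_iff_le_add.2 (ciSup_le fun i => ?_)⟩
  · linarith [(abs_sub_le_iff.1 (h i)).1, le_ciSup hG i]
  · linarith [(abs_sub_le_iff.1 (h i)).2, le_ciSup hF i]

theorem bddAbove_range_of_abs_le {F : ι → ℝ} {C : ℝ} (h : ∀ i, |F i| ≤ C) :
    BddAbove (Set.range F) :=
  ⟨C, Set.forall_mem_range.2 fun i => (le_abs_self _).trans (h i)⟩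

theorem abs_iSup_le {F : ι → ℝ} {C : ℝ} (hC : 0 ≤ C) (h : ∀ i, |F i| ≤ C) :
    |⨆ i, F i| ≤ C := by
  simpa using abs_iSup_sub_iSup_le (bddAbove_range_of_abs_le h)
    (bddAbove_range_of_abs_le (F := fun _ : ι => (0 : ℝ)) (C := 0) fun _ => by simp) hC
    (by simpa using h)

theorem iSup_abs_sub_iSup_le {S : Type*} {F G : S → ι → ℝ} {C : ℝ}
    (hF : ∀ x, BddAbove (Set.range (F x))) (hG : ∀ x, BddAbove (Set.range (G x))) (hC : 0 ≤ C)
    (h : ∀ x i, |F x i - G x i| ≤ C) : ⨆ x, |(⨆ i, F x i) - ⨆ i, G x i| ≤ C :=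
  Real.iSup_le (fun x => abs_iSup_sub_iSup_le (hF x) (hG x) hC (h x)) hC

end Supremum

section BoundedFunctions

variable {S : Type*}

theorem bdd_iff_memℓp_top {ψ : S → ℝ} : Bdd ψ ↔ Memℓp ψ ∞ := by
  simp [Bdd, memℓp_infty_iff, bddAbove_def, Real.norm_eq_abs]

theorem lp_top_dist_eq_iSup (f h : lp (fun _ : S => ℝ) ∞) : dist f h = ⨆ x, |f x - h x| := by
  simp [dist_eq_norm, lp.norm_eq_ciSup, Real.norm_eq_abs]

theorem Bdd.abs_sub_le_iSup {ψ φ : S → ℝ} (hψ : Bdd ψ) (hφ : Bdd φ) (x : S) :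
    |ψ x - φ x| ≤ ⨆ x, |ψ x - φ x| := by
  obtain ⟨C, hC⟩ := hψ
  obtain ⟨D, hD⟩ := hφ
  exact le_ciSup ⟨C + D, Set.forall_mem_range.2 fun x =>
    (abs_sub _ _).trans (add_le_add (hC x) (hD x))⟩ x

theorem GFun_tailRep (n : ℕ) (hn : 3 ≤ n) (ψ φ : S → ℝ) :
    GFun n hn (tailRep n ψ φ) = ⨆ x, |ψ x - φ x| := by
  have h01 : ((⟨0, by omega⟩ : Fin n), (⟨1, by omega⟩ : Fin n)) ∈
      Finset.univ.filter (fun p : Fin n × Fin n => p.1 < p.2) :=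
    Finset.mem_filter.2 ⟨Finset.mem_univ _, Fin.mk_lt_mk.2 one_pos⟩
  refine le_antisymm (Finset.sup'_le _ _ fun ⟨p, q⟩ hpq => ?_) ?_
  · simp only [Finset.mem_filter, Finset.mem_univ, true_and] at hpq
    have hq : (q : ℕ) ≠ 0 := by
      have := Fin.lt_def.1 hpq
      omega
    by_cases hp : (p : ℕ) = 0
    · simp [tailRep, hp, hq]
    · simp [tailRep, hp, hq, Real.iSup_nonneg fun x => abs_nonneg (ψ x - φ x)]
  · refine le_trans ?_ (Finset.le_sup' _ h01)
    simp [tailRep]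

theorem bdd_iSup {ι : Type*} {F : S → ι → ℝ} (h : ∃ C, ∀ x i, |F x i| ≤ C) :
    Bdd fun x => ⨆ i, F x i := by
  obtain ⟨C, hC⟩ := h
  exact ⟨|C|, fun x => abs_iSup_le (abs_nonneg C) fun i => (hC x i).trans (le_abs_self C)⟩

theorem existsUnique_bdd_isFixedPt {T : (S → ℝ) → S → ℝ} {r : ℝ} (hr0 : 0 ≤ r) (hr1 : r < 1)
    (hbdd : ∀ ψ, Bdd ψ → Bdd (T ψ))
    (hT : ∀ ψ φ, Bdd ψ → Bdd φ → 1 / (1 + r) * ⨆ x, |ψ x - T ψ x| ≤ ⨆ x, |ψ x - φ x| →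
      ⨆ x, |T ψ x - T φ x| ≤ r * ⨆ x, |ψ x - φ x|) :
    ∃! f, Bdd f ∧ IsFixedPt T f := by
  have hbdd' (f : lp (fun _ : S => ℝ) ∞) : Memℓp (T f) ∞ :=
    bdd_iff_memℓp_top.1 (hbdd f (bdd_iff_memℓp_top.2 f.2))
  let T' : lp (fun _ : S => ℝ) ∞ → lp (fun _ : S => ℝ) ∞ := fun f => ⟨T f, hbdd' f⟩
  have hT' : SuzukiContraction r T' := fun f h hpre => by
    simp only [lp_top_dist_eq_iSup] at hpre ⊢
    exact hT f h (bdd_iff_memℓp_top.2 f.2) (bdd_iff_memℓp_top.2 h.2) hpre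
  obtain ⟨z, hz, huniq⟩ := hT'.existsUnique_isFixedPt hr0 hr1
  refine ⟨z, ⟨bdd_iff_memℓp_top.2 z.2, congrArg Subtype.val hz⟩, fun f ⟨hf, hfix⟩ => ?_⟩
  exact congrArg Subtype.val (huniq ⟨f, bdd_iff_memℓp_top.1 hf⟩ (Subtype.ext hfix))

end BoundedFunctions

theorem dynamicProgramming_unique_solution_general
    {U V : Type*}
    (S : Set U) (D : Set V)
    (g : S × D → ℝ) (hg : ∃ C, ∀ p, |g p| ≤ C)
    (M : S × D × ℝ → ℝ) (hM : ∃ C, ∀ p, |M p| ≤ C)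
    (τ : S × D → S) (n : ℕ) (hn : 3 ≤ n)
    (T : (S → ℝ) → (S → ℝ))
    (hTdef : ∀ (ψ : S → ℝ) (x : S), T ψ x = ⨆ y : D, (g (x, y) + M (x, y, ψ (τ (x, y)))))
    (r : ℝ) (hr0 : 0 ≤ r) (hr1 : r < 1)
    (hSuz : ∀ ψ φ : S → ℝ, Bdd ψ → Bdd φ →
      (1 / (1 + r)) * GFun n hn (tailRep n ψ (T ψ)) ≤ GFun n hn (tailRep n ψ φ) →
      ∀ (x : S) (y : D) (t : S), |M (x, y, ψ t) - M (x, y, φ t)| ≤ r * |ψ t - φ t|) :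
    ∃! f : S → ℝ, Bdd f ∧ ∀ x : S, f x = ⨆ y : D, (g (x, y) + M (x, y, f (τ (x, y)))) := by
  obtain ⟨Cg, hCg⟩ := hg
  obtain ⟨CM, hCM⟩ := hM
  have hbound (ψ : S → ℝ) (x : S) (y : D) : |g (x, y) + M (x, y, ψ (τ (x, y)))| ≤ |Cg| + |CM| :=
    (abs_add_le _ _).trans (add_le_add ((hCg _).trans (le_abs_self _))
      ((hCM _).trans (le_abs_self _)))
  have hcontr (ψ φ : S → ℝ) (hψ : Bdd ψ) (hφ : Bdd φ)
      (hpre : 1 / (1 + r) * ⨆ x, |ψ x - T ψ x| ≤ ⨆ x, |ψ x - φ x|) :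
      ⨆ x, |T ψ x - T φ x| ≤ r * ⨆ x, |ψ x - φ x| := by
    have hLip := hSuz ψ φ hψ hφ (by simpa only [GFun_tailRep] using hpre)
    simp only [hTdef]
    refine iSup_abs_sub_iSup_le (fun x => bddAbove_range_of_abs_le (hbound ψ x))
      (fun x => bddAbove_range_of_abs_le (hbound φ x))
      (mul_nonneg hr0 (Real.iSup_nonneg fun _ => abs_nonneg _)) fun x y => ?_
    rw [add_sub_add_left_eq_sub]
    exact (hLip x y _).trans (mul_le_mul_of_nonneg_left (hψ.abs_sub_le_iSup hφ _) hr0)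
  have hfix (f : S → ℝ) :
      IsFixedPt T f ↔ ∀ x, f x = ⨆ y : D, (g (x, y) + M (x, y, f (τ (x, y)))) := by
    simp only [IsFixedPt, funext_iff, hTdef, eq_comm]
  simpa only [hfix] using existsUnique_bdd_isFixedPt hr0 hr1
    (fun ψ _ => funext (hTdef ψ) ▸ bdd_iSup ⟨_, hbound ψ⟩) hcontr

/-- existence and uniqueness of a bounded solution of the functional
equation of dynamic programming. -/
theorem dynamicProgramming_unique_solution
    {U V : Type*} [NormedAddCommGroup U] [NormedSpace ℝ U] [CompleteSpace U]
    [NormedAddCommGroup V] [NormedSpace ℝ V] [CompleteSpace V]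
    (S : Set U) (D : Set V) [Nonempty S] [Nonempty D]
    (g : S × D → ℝ) (hg : ∃ C, ∀ p, |g p| ≤ C)
    (M : S × D × ℝ → ℝ) (hM : ∃ C, ∀ p, |M p| ≤ C)
    (τ : S × D → S) (n : ℕ) (hn : 3 ≤ n)
    (T : (S → ℝ) → (S → ℝ))
    (hTdef : ∀ (ψ : S → ℝ) (x : S), T ψ x = ⨆ y : D, (g (x, y) + M (x, y, ψ (τ (x, y)))))
    (r : ℝ) (hr0 : 0 ≤ r) (hr1 : r < 1)
    (hSuz : ∀ ψ φ : S → ℝ, Bdd ψ → Bdd φ →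
      (1 / (1 + r)) * GFun n hn (tailRep n ψ (T ψ)) ≤ GFun n hn (tailRep n ψ φ) →
      ∀ (x : S) (y : D) (t : S), |M (x, y, ψ t) - M (x, y, φ t)| ≤ r * |ψ t - φ t|) :
    ∃! f : S → ℝ, Bdd f ∧ ∀ x : S, f x = ⨆ y : D, (g (x, y) + M (x, y, f (τ (x, y)))) :=
  dynamicProgramming_unique_solution_general S D g hg M hM τ n hn T hTdef r hr0 hr1 hSuz
end
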